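/- arXiv:2208.05288 — 2 statements merged into one kernel-verified Lean document; each statement's English description precedes it below -/
import Mathlib

section
/- Tennenbaum's partial order ℙ_T has property K (is Knaster): every uncountable set of conditions in ℙ_T contains an uncountable subset whose elements are pairwise compatible (any two have a common extension). Here ℙ_T consists of all pairs (t, r) where t ⊆ ω₁ is finite and r is a strict partial order on t contained in the usual ordinal order (α r β implies α < β) such that (t, r) is a tree, meaning the set of r-predecessors of each element of t is linearly ordered by r; and (t₁, r₁) extends (t₂, r₂) if and only if t₂ ⊆ t₁ and r₂ = r₁ ∩ (t₂ × t₂). -/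
/-!
Only countably many conditions share a support, so an uncountable family of conditions has
uncountably many supports, and the Δ-system lemma thins it to an uncountable family whose
supports pairwise meet in a fixed finite root `R ⊆ ω₁`. Since the elements of `R` are countable
ordinals, only countably many of these supports have a non-root element below an element of `R`,
and the trees induced on `R` take only finitely many shapes. Two of the remaining conditions are
compatible: their union is a common extension, since a predecessor of a common (hence root)
element is a root element, on which the two trees agree.
-/

/-- The first uncountable cardinal, as an ordinal. -/
noncomputable def omegaOne : Ordinal.{0} := (Cardinal.aleph 1).ord

/-- A condition of Tennenbaum's forcing: a finite set `t ⊆ ω₁` together with a strict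
partial order `r` on `t` contained in the usual ordinal order, such that `(t, r)` is a
tree, i.e. the `r`-predecessors of every element are linearly ordered by `r`. -/
structure TennCond : Type 1 where
  t : Finset Ordinal.{0}
  r : Ordinal.{0} → Ordinal.{0} → Prop
  mem_lt : ∀ α ∈ t, α < omegaOne
  r_mem : ∀ α β, r α β → α ∈ t ∧ β ∈ t ∧ α < β
  r_trans : ∀ α β γ, r α β → r β γ → r α γ
  r_tree : ∀ β α γ, r α β → r γ β → α = γ ∨ r α γ ∨ r γ α

/-- `p` extends `q` in Tennenbaum's forcing: `q.t ⊆ p.t` and the order of `q` is the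
restriction of the order of `p` to `q.t`. -/
def TennExt (p q : TennCond) : Prop :=
  q.t ⊆ p.t ∧ ∀ α β, q.r α β ↔ (p.r α β ∧ α ∈ q.t ∧ β ∈ q.t)

/-- Two conditions are compatible if they have a common extension. -/
def TennCompat (p q : TennCond) : Prop := ∃ s, TennExt s p ∧ TennExt s q

open Set

section Countability

variable {α β : Type*}

theorem exists_not_countable_fiber [Countable β] {s : Set α} (hs : ¬ s.Countable) (f : α → β) :
    ∃ b, ¬ {a ∈ s | f a = b}.Countable := by
  by_contra! h
  exact hs ((countable_iUnion h).mono fun a ha =>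
    mem_iUnion_of_mem (f a) (show a ∈ {x ∈ s | f x = f a} from ⟨ha, rfl⟩))

theorem not_countable_image_of_countable_fibers {s : Set α} {f : α → β} (hs : ¬ s.Countable)
    (hf : ∀ b, {a ∈ s | f a = b}.Countable) : ¬ (f '' s).Countable := fun h =>
  hs ((h.biUnion fun b _ => hf b).mono fun a ha => mem_biUnion (mem_image_of_mem f ha)
    (show a ∈ {x ∈ s | f x = f a} from ⟨ha, rfl⟩))

theorem countable_Iio_of_lt_omegaOne {ρ : Ordinal.{0}} (h : ρ < omegaOne) : (Iio ρ).Countable := by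
  rw [omegaOne, Cardinal.lt_ord, Cardinal.lt_aleph_one_iff] at h
  rwa [← Cardinal.le_aleph0_iff_set_countable, Cardinal.mk_Iio_ordinal, Cardinal.lift_le_aleph0]

end Countability

section DeltaSystem

variable {α ι : Type*}

theorem exists_maximal_pairwise_subset (F : Set α) (r : α → α → Prop) :
    ∃ M, Maximal (fun G => G ⊆ F ∧ G.Pairwise r) M :=
  zorn_subset {G | G ⊆ F ∧ G.Pairwise r} fun c hc hchain =>
    ⟨⋃₀ c, ⟨sUnion_subset fun _ hs => (hc hs).1, hchain.pairwise_sUnion.2 fun _ hs => (hc hs).2⟩,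
      fun _ => subset_sUnion_of_mem⟩

variable [DecidableEq α]

theorem exists_not_countable_pairwise_inter_eq_empty {F : Set (Finset α)}
    (hF : ¬ F.Countable) (hpt : ∀ x, {a ∈ F | x ∈ a}.Countable) :
    ∃ G ⊆ F, ¬ G.Countable ∧ G.Pairwise fun a b => a ∩ b = ∅ := by
  obtain ⟨M, hM⟩ := exists_maximal_pairwise_subset F fun a b => a ∩ b = ∅
  refine ⟨M, hM.prop.1, fun hMc => hF ?_, hM.prop.2⟩
  -- by maximality, a member of `F` outside `M` meets some member of `M`
  have hcover : F ⊆ M ∪ ⋃ x ∈ ⋃ b ∈ M, (b : Set α), {a ∈ F | x ∈ a} := by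
    intro a haF
    refine (em (a ∈ M)).imp id fun haM => ?_
    obtain ⟨b, hbM, x, hxa, hxb⟩ : ∃ b ∈ M, ∃ x ∈ a, x ∈ b := by
      by_contra! hdisj
      refine haM (hM.mem_of_prop_insert ⟨insert_subset haF hM.prop.1, hM.prop.2.insert ?_⟩)
      intro b hb _
      have h : a ∩ b = ∅ := Finset.eq_empty_of_forall_notMem fun x hx =>
        hdisj b hb x (Finset.mem_inter.1 hx).1 (Finset.mem_inter.1 hx).2
      exact ⟨h, Finset.inter_comm a b ▸ h⟩
    exact mem_biUnion (mem_biUnion hbM hxb) ⟨haF, hxa⟩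
  exact (hMc.union ((hMc.biUnion fun b _ => b.countable_toSet).biUnion fun x _ => hpt x)).mono
    hcover

theorem exists_not_countable_pairwise_inter_eq_of_card_le (n : ℕ) {F : Set (Finset α)}
    (hF : ¬ F.Countable) (hcard : ∀ a ∈ F, a.card ≤ n) :
    ∃ G ⊆ F, ¬ G.Countable ∧ ∃ R, G.Pairwise fun a b => a ∩ b = R := by
  induction n generalizing F with
  | zero =>
    refine absurd ((countable_singleton ∅).mono fun a ha => ?_) hF
    exact Finset.card_eq_zero.1 (Nat.le_zero.1 (hcard a ha))
  | succ n ih =>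
    by_cases hx : ∃ x, ¬ {a ∈ F | x ∈ a}.Countable
    · -- remove a point `x` lying in uncountably many members, and put it back into the root
      obtain ⟨x, hx⟩ := hx
      set F₀ := {a ∈ F | x ∈ a}
      have hinj : InjOn (·.erase x) F₀ := fun a ha b hb h => by
        rw [← Finset.insert_erase ha.2, ← Finset.insert_erase hb.2]
        exact congrArg (insert x) h
      have hcard' : ∀ b ∈ (·.erase x) '' F₀, b.card ≤ n := by
        rintro _ ⟨a, ha, rfl⟩
        show (a.erase x).card ≤ n
        have := Finset.card_erase_of_mem ha.2
        have := hcard a ha.1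
        omega
      obtain ⟨G, hGF, hG, R, hR⟩ :=
        ih (fun h => hx (countable_of_injective_of_countable_image hinj h)) hcard'
      refine ⟨F₀ ∩ (·.erase x) ⁻¹' G, fun a ha => ha.1.1, fun h => hG ?_, insert x R, ?_⟩
      · refine (h.image (·.erase x)).mono fun b hb => ?_
        obtain ⟨a, ha, rfl⟩ := hGF hb
        exact ⟨a, ⟨ha, hb⟩, rfl⟩
      · intro a ha b hb hab
        rw [← Finset.insert_erase ha.1.2, ← Finset.insert_erase hb.1.2,
          ← Finset.insert_inter_distrib, hR ha.2 hb.2 fun h => hab (hinj ha.1 hb.1 h)]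
    · simp only [not_exists, not_not] at hx
      obtain ⟨G, hGF, hG, hGdisj⟩ := exists_not_countable_pairwise_inter_eq_empty hF hx
      exact ⟨G, hGF, hG, ∅, hGdisj⟩

theorem exists_not_countable_pairwise_inter_eq {F : Set (Finset α)} (hF : ¬ F.Countable) :
    ∃ G ⊆ F, ¬ G.Countable ∧ ∃ R, G.Pairwise fun a b => a ∩ b = R := by
  obtain ⟨n, hn⟩ := exists_not_countable_fiber hF Finset.card
  obtain ⟨G, hGF, hG⟩ := exists_not_countable_pairwise_inter_eq_of_card_le n hn fun a ha => ha.2.le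
  exact ⟨G, hGF.trans fun a ha => ha.1, hG⟩

theorem exists_not_countable_pairwise_inter_eq_of_countable_fibers {s : Set ι}
    {f : ι → Finset α} (hs : ¬ s.Countable) (hf : ∀ a, {i ∈ s | f i = a}.Countable) :
    ∃ t ⊆ s, ¬ t.Countable ∧ ∃ R, t.Pairwise fun i j => f i ∩ f j = R := by
  obtain ⟨u, hus, hu⟩ := exists_subset_bijOn s f
  obtain ⟨G, hGF, hG, R, hR⟩ :=
    exists_not_countable_pairwise_inter_eq (not_countable_image_of_countable_fibers hs hf)
  refine ⟨u ∩ f ⁻¹' G, inter_subset_left.trans hus, fun h => hG ((h.image f).mono fun a ha => ?_),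
    R, fun i hi j hj hij => hR hi.2 hj.2 (hu.injOn.ne hi.1 hj.1 hij)⟩
  obtain ⟨i, hi, rfl⟩ := hu.surjOn (hGF ha)
  exact ⟨i, ⟨hi, ha⟩, rfl⟩

theorem countable_setOf_meets_off_root {s : Set ι} {f : ι → Finset α} {R : Finset α}
    (hR : s.Pairwise fun i j => f i ∩ f j = R) {C : Set α} (hC : C.Countable) :
    {i ∈ s | ∃ x ∈ f i, x ∈ C ∧ x ∉ R}.Countable := by
  refine (hC.biUnion fun x _ => Subsingleton.countable (s := {i ∈ s | x ∈ f i ∧ x ∉ R}) ?_).mono ?_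
  · rintro i ⟨hi, hxi, hxR⟩ j ⟨hj, hxj, -⟩
    by_contra hij
    exact hxR (hR hi hj hij ▸ Finset.mem_inter.2 ⟨hxi, hxj⟩)
  · rintro i ⟨hi, x, hx, hxC, hxR⟩
    exact mem_biUnion hxC ⟨hi, hx, hxR⟩

end DeltaSystem

namespace TennCond

theorem eq_of_t_eq {p q : TennCond} (ht : p.t = q.t)
    (hr : ∀ a ∈ p.t, ∀ b ∈ p.t, p.r a b ↔ q.r a b) : p = q := by
  obtain ⟨t, r, _, r_mem, _, _⟩ := p
  obtain ⟨t', r', _, r_mem', _, _⟩ := q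
  obtain rfl : t = t' := ht
  obtain rfl : r = r' := funext fun a => funext fun b => propext
    ⟨fun h => (hr a (r_mem a b h).1 b (r_mem a b h).2.1).1 h,
      fun h => (hr a (r_mem' a b h).1 b (r_mem' a b h).2.1).2 h⟩
  rfl

theorem finite_setOf_t_eq (T : Finset Ordinal.{0}) : {p : TennCond | p.t = T}.Finite :=
  Finite.of_finite_image (f := fun p (a b : T) => p.r a b) (toFinite _)
    fun _ hp _ hq h => eq_of_t_eq (hp.trans hq.symm) fun a ha b hb =>
      Iff.of_eq (congrFun (congrFun h ⟨a, hp ▸ ha⟩) ⟨b, hp ▸ hb⟩)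

variable {p q : TennCond}

noncomputable def union (hpq : ∀ a b, b ∈ q.t → p.r a b → q.r a b)
    (hqp : ∀ a b, b ∈ p.t → q.r a b → p.r a b) : TennCond where
  t := p.t ∪ q.t
  r a b := p.r a b ∨ q.r a b
  mem_lt a ha := (Finset.mem_union.1 ha).elim (p.mem_lt a) (q.mem_lt a)
  r_mem a b := by
    rintro (h | h)
    · obtain ⟨ha, hb, hab⟩ := p.r_mem a b h
      exact ⟨Finset.mem_union_left _ ha, Finset.mem_union_left _ hb, hab⟩
    · obtain ⟨ha, hb, hab⟩ := q.r_mem a b h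
      exact ⟨Finset.mem_union_right _ ha, Finset.mem_union_right _ hb, hab⟩
  r_trans a b c := by
    rintro (hab | hab) (hbc | hbc)
    · exact .inl (p.r_trans a b c hab hbc)
    · exact .inr (q.r_trans a b c (hpq a b (q.r_mem b c hbc).1 hab) hbc)
    · exact .inl (p.r_trans a b c (hqp a b (p.r_mem b c hbc).1 hab) hbc)
    · exact .inr (q.r_trans a b c hab hbc)
  r_tree b a c := by
    rintro (ha | ha) (hc | hc)
    · exact (p.r_tree b a c ha hc).imp_right (Or.imp .inl .inl)
    · exact (q.r_tree b a c (hpq a b (q.r_mem c b hc).2.1 ha) hc).imp_right (Or.imp .inr .inr)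
    · exact (p.r_tree b a c (hqp a b (p.r_mem c b hc).2.1 ha) hc).imp_right (Or.imp .inl .inl)
    · exact (q.r_tree b a c ha hc).imp_right (Or.imp .inr .inr)

theorem tennExt_union_left (hpq : ∀ a b, b ∈ q.t → p.r a b → q.r a b)
    (hqp : ∀ a b, b ∈ p.t → q.r a b → p.r a b) : TennExt (union hpq hqp) p :=
  ⟨Finset.subset_union_left, fun a b =>
    ⟨fun h => ⟨.inl h, (p.r_mem a b h).1, (p.r_mem a b h).2.1⟩,
      fun ⟨h, _, hb⟩ => h.elim id (hqp a b hb)⟩⟩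

theorem tennExt_union_right (hpq : ∀ a b, b ∈ q.t → p.r a b → q.r a b)
    (hqp : ∀ a b, b ∈ p.t → q.r a b → p.r a b) : TennExt (union hpq hqp) q :=
  ⟨Finset.subset_union_right, fun a b =>
    ⟨fun h => ⟨.inr h, (q.r_mem a b h).1, (q.r_mem a b h).2.1⟩,
      fun ⟨h, _, hb⟩ => h.elim (hpq a b hb) id⟩⟩

theorem tennCompat_of_r_imp (hpq : ∀ a b, b ∈ q.t → p.r a b → q.r a b)
    (hqp : ∀ a b, b ∈ p.t → q.r a b → p.r a b) : TennCompat p q :=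
  ⟨_, tennExt_union_left hpq hqp, tennExt_union_right hpq hqp⟩

theorem r_of_inter_eq {R : Finset Ordinal.{0}} (hR : p.t ∩ q.t = R)
    (hagree : ∀ a ∈ R, ∀ b ∈ R, p.r a b ↔ q.r a b) (hp : ∀ x ∈ p.t, ∀ ρ ∈ R, x < ρ → x ∈ R)
    {a b : Ordinal.{0}} (hb : b ∈ q.t) (hab : p.r a b) : q.r a b := by
  obtain ⟨ha, hb', hlt⟩ := p.r_mem a b hab
  have hbR : b ∈ R := hR ▸ Finset.mem_inter.2 ⟨hb', hb⟩
  exact (hagree a (hp a ha b hbR hlt) b hbR).1 hab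

theorem tennCompat_of_inter_eq {R : Finset Ordinal.{0}} (hR : p.t ∩ q.t = R)
    (hagree : ∀ a ∈ R, ∀ b ∈ R, p.r a b ↔ q.r a b) (hp : ∀ x ∈ p.t, ∀ ρ ∈ R, x < ρ → x ∈ R)
    (hq : ∀ x ∈ q.t, ∀ ρ ∈ R, x < ρ → x ∈ R) : TennCompat p q :=
  tennCompat_of_r_imp (fun _ _ => r_of_inter_eq hR hagree hp)
    fun _ _ => r_of_inter_eq (Finset.inter_comm p.t q.t ▸ hR)
      (fun a ha b hb => (hagree a ha b hb).symm) hq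

end TennCond

/-- Tennenbaum's forcing has property K: every uncountable set of conditions has an
uncountable pairwise compatible subset. -/
theorem tennenbaum_knaster :
    ∀ A : Set TennCond, ¬ A.Countable →
      ∃ B ⊆ A, ¬ B.Countable ∧ ∀ p ∈ B, ∀ q ∈ B, TennCompat p q := by
  intro A hA
  obtain ⟨A₁, hA₁A, hA₁, R, hΔ⟩ := exists_not_countable_pairwise_inter_eq_of_countable_fibers
    (f := TennCond.t) hA fun T => (TennCond.finite_setOf_t_eq T).countable.mono fun p hp => hp.2
  have hRω : ∀ ρ ∈ R, ρ < omegaOne := by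
    obtain ⟨p, hp, q, hq, hpq⟩ := not_subsingleton_iff.1 fun h => hA₁ h.countable
    exact fun ρ hρ => p.mem_lt ρ (Finset.mem_of_mem_inter_left (hΔ hp hq hpq ▸ hρ))
  have hC : (⋃ ρ ∈ R, Iio ρ).Countable :=
    R.countable_toSet.biUnion fun ρ hρ => countable_Iio_of_lt_omegaOne (hRω ρ hρ)
  set A₂ := A₁ \ {p ∈ A₁ | ∃ x ∈ p.t, x ∈ ⋃ ρ ∈ R, Iio ρ ∧ x ∉ R}
  have hA₂ : ¬ A₂.Countable := fun h => hA₁ (h.of_sdiff (countable_setOf_meets_off_root hΔ hC))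
  have above_root : ∀ p ∈ A₂, ∀ x ∈ p.t, ∀ ρ ∈ R, x < ρ → x ∈ R := fun p hp x hx ρ hρ hxρ =>
    by_contra fun hxR => hp.2 ⟨hp.1, x, hx, mem_biUnion hρ hxρ, hxR⟩
  obtain ⟨τ, hA₃⟩ := exists_not_countable_fiber hA₂ fun p (a b : R) => p.r a b
  refine ⟨_, fun p hp => hA₁A hp.1.1, hA₃, fun p hp q hq => ?_⟩
  obtain rfl | hpq := eq_or_ne p q
  · exact TennCond.tennCompat_of_r_imp (fun _ _ _ => id) fun _ _ _ => id
  refine TennCond.tennCompat_of_inter_eq (hΔ hp.1.1 hq.1.1 hpq) (fun a ha b hb => ?_)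
    (above_root p hp.1) (above_root q hq.1)
  exact Iff.of_eq (congrFun (congrFun (hp.2.trans hq.2.symm) ⟨a, ha⟩) ⟨b, hb⟩)
end

section
/- For every regular uncountable cardinal κ there exists a set S ⊆ {α < κ : cof(α) = ω} such that both S and {α < κ : cof(α) = ω} \ S are stationary in κ; that is, κ ∩ Cof(ω) contains a subset that is stationary and co-stationary in κ ∩ Cof(ω). -/
/-- `C` is a club subset of the regular uncountable cardinal (with ordinal) `κ`:
it is a subset of `κ`, unbounded in `κ`, and contains the supremum of each of its
nonempty subsets that is bounded below `κ`. -/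
def IsClubIn (C : Set Ordinal) (κ : Ordinal) : Prop :=
  C ⊆ Set.Iio κ ∧ (∀ a < κ, ∃ b ∈ C, a ≤ b) ∧
    ∀ s ⊆ C, s.Nonempty → sSup s < κ → sSup s ∈ C

/-- `S` is stationary in `κ`: it is a subset of `κ` meeting every club subset of `κ`. -/
def IsStationaryIn (S : Set Ordinal) (κ : Ordinal) : Prop :=
  S ⊆ Set.Iio κ ∧ ∀ C, IsClubIn C κ → (S ∩ C).Nonempty

/-!
Choose for every `α ∈ κ ∩ Cof(ω)` a sequence `f α : ℕ → α` cofinal in `α`. Some coordinate `n`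
is large on a stationary set at every height: for each `β < κ` the set of `α` with
`β < f α n` is stationary. Otherwise there are bounds `β n` and clubs `C n` witnessing the
failure for each `n`, and a point of cofinality `ω` in `⋂ n, C n` above `⨆ n, β n` would have a
sequence bounded by that supremum. On the other hand `α ↦ f α n` is regressive, so by Fodor's
lemma it is bounded by some `β` on a stationary set. The sets `{α | β < f α n}` and
`{α | f α n ≤ β}` then split `κ ∩ Cof(ω)` into two stationary pieces.
-/

universe u v

open Cardinal Ordinal Order Set

def cofOmegaBelow (κ : Ordinal.{u}) : Set Ordinal.{u} := {α | α < κ ∧ α.cof = ℵ₀}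

def diagInter (κ : Ordinal.{u}) (D : Ordinal.{u} → Set Ordinal.{u}) : Set Ordinal.{u} :=
  {α | α < κ ∧ ∀ β < α, α ∈ D β}

theorem not_isStationaryIn_iff {S : Set Ordinal} {κ : Ordinal} (hS : S ⊆ Iio κ) :
    ¬ IsStationaryIn S κ ↔ ∃ C, IsClubIn C κ ∧ Disjoint S C := by
  simp [IsStationaryIn, hS, disjoint_iff, not_nonempty_iff_eq_empty]

theorem IsClubIn.mem_of_forall_lt_exists {C : Set Ordinal} {κ l : Ordinal}
    (hC : IsClubIn C κ) (hlκ : l < κ) (hl : 0 < l) (h : ∀ δ < l, ∃ c ∈ C, δ < c ∧ c ≤ l) :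
    l ∈ C := by
  have hne : (C ∩ Iic l).Nonempty := by
    obtain ⟨c, hc, -, hcl⟩ := h 0 hl
    exact ⟨c, hc, hcl⟩
  have hsup : sSup (C ∩ Iic l) = l := by
    refine (csSup_le hne fun c hc => hc.2).antisymm (not_lt.1 fun hlt => ?_)
    obtain ⟨c, hc, hltc, hcl⟩ := h _ hlt
    exact hltc.not_ge (le_csSup ⟨l, fun _ h => h.2⟩ ⟨hc, hcl⟩)
  simpa only [hsup] using hC.2.2 _ inter_subset_left hne (by rwa [hsup])

theorem sSup_mem_diagInter {κ : Ordinal} {D : Ordinal → Set Ordinal}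
    (hD : ∀ β < κ, IsClubIn (D β) κ) {s : Set Ordinal} (hs : s ⊆ diagInter κ D)
    (hne : s.Nonempty) (hlt : sSup s < κ) : sSup s ∈ diagInter κ D := by
  have hbdd : BddAbove s := ⟨κ, fun c hc => (hs hc).1.le⟩
  refine ⟨hlt, fun β hβ => (hD β (hβ.trans hlt)).mem_of_forall_lt_exists hlt hβ.bot_lt
    fun δ hδ => ?_⟩
  obtain ⟨c, hcs, hc⟩ := (lt_csSup_iff hbdd hne).1 (max_lt hδ hβ)
  exact ⟨c, (hs hcs).2 β ((le_max_right _ _).trans_lt hc), (le_max_left _ _).trans_lt hc,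
    le_csSup hbdd hcs⟩

theorem exists_nat_seq_iSup_eq_of_cof_eq_aleph0 {α : Ordinal.{u}} (h : α.cof = ℵ₀) :
    ∃ g : ℕ → Ordinal.{u}, (∀ n, g n < α) ∧ ⨆ n, g n = α := by
  obtain ⟨f, hf⟩ := exists_isFundamentalSeq (o := α) (a := ω) (by rw [h, ord_aleph0])
  let g : ℕ → Ordinal.{u} := fun n => f ⟨n, natCast_lt_omega0 n⟩
  refine ⟨g, fun n => (f _).2, (Ordinal.iSup_le fun n => (f _).2.le).antisymm ?_⟩
  calc α = ⨆ i, (f i).1 := (hf.iSup_eq one_lt_omega0).symm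
    _ ≤ ⨆ n, g n := Ordinal.iSup_le fun ⟨i, hi⟩ => by
      obtain ⟨n, rfl⟩ := lt_omega0.1 hi
      exact Ordinal.le_iSup g n

section UncountableCof

variable {κ : Ordinal.{u}}

theorem exists_strictMono_nat_iSup_lt (hκ : ℵ₀ < κ.cof) {r : Ordinal.{u} → Ordinal.{u} → Prop}
    (h : ∀ γ < κ, ∃ δ < κ, γ < δ ∧ r γ δ) {a : Ordinal.{u}} (ha : a < κ) :
    ∃ x : ℕ → Ordinal.{u}, x 0 = a ∧ StrictMono x ∧ ⨆ n, x n < κ ∧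
      ∀ n, r (x n) (x (n + 1)) := by
  choose! F hFκ hlt hr using h
  have hxκ : ∀ n, F^[n] a < κ := by
    intro n
    induction n with
    | zero => exact ha
    | succ n ih => exact Function.iterate_succ_apply' F n a ▸ hFκ _ ih
  refine ⟨fun n => F^[n] a, rfl, strictMono_nat_of_lt_succ fun n => ?_,
    lift_iSup_lt_of_lt_cof (by simpa using hκ) hxκ, fun n => ?_⟩
  · simpa only [Function.iterate_succ_apply'] using hlt _ (hxκ n)
  · simpa only [Function.iterate_succ_apply'] using hr _ (hxκ n)

theorem exists_cof_eq_aleph0_mem_iInter (hκ : ℵ₀ < κ.cof) {ι : Type v}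
    (hι : Cardinal.lift.{u} #ι < Cardinal.lift.{v} κ.cof) {C : ι → Set Ordinal.{u}}
    (hC : ∀ i, IsClubIn (C i) κ) {a : Ordinal.{u}} (ha : a < κ) :
    ∃ l ∈ ⋂ i, C i, a < l ∧ l < κ ∧ l.cof = ℵ₀ := by
  have hlim : IsSuccLimit κ := one_lt_cof_iff.1 (one_lt_aleph0.trans hκ)
  have step : ∀ γ < κ, ∃ δ < κ, γ < δ ∧ ∀ i, ∃ c ∈ C i, γ ≤ c ∧ c ≤ δ := by
    intro γ hγ
    choose b hbC hγb using fun i => (hC i).2.1 γ hγ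
    have hbκ : ⨆ i, b i < κ :=
      lift_iSup_lt_of_lt_cof (by rwa [← lift_cof]) fun i => (hC i).1 (hbC i)
    have hbdd : BddAbove (range b) := ⟨κ, by rintro _ ⟨i, rfl⟩; exact ((hC i).1 (hbC i)).le⟩
    exact ⟨(⨆ i, b i) ⊔ succ γ, max_lt hbκ (hlim.succ_lt hγ), (lt_succ γ).trans_le le_sup_right,
      fun i => ⟨b i, hbC i, hγb i, (le_ciSup hbdd i).trans le_sup_left⟩⟩
  obtain ⟨x, rfl, hx, hxκ, hxC⟩ := exists_strictMono_nat_iSup_lt hκ step ha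
  have hle : ∀ n, x n ≤ ⨆ n, x n := Ordinal.le_iSup x
  have hx0 : x 0 < ⨆ n, x n := (hx zero_lt_one).trans_le (hle 1)
  refine ⟨⨆ n, x n, mem_iInter.2 fun i => ?_, hx0, hxκ, by simpa using lift_cof_iSup hx⟩
  refine (hC i).mem_of_forall_lt_exists hxκ hx0.bot_lt fun δ hδ => ?_
  obtain ⟨n, hn⟩ := Ordinal.lt_iSup_iff.1 hδ
  obtain ⟨c, hc, hnc, hcn⟩ := hxC n i
  exact ⟨c, hc, hn.trans_le hnc, hcn.trans (hle _)⟩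

theorem isStationaryIn_cofOmegaBelow (hκ : ℵ₀ < κ.cof) :
    IsStationaryIn (cofOmegaBelow κ) κ := by
  refine ⟨fun _ h => h.1, fun C hC => ?_⟩
  obtain ⟨l, hlC, -, hlκ, hl⟩ := exists_cof_eq_aleph0_mem_iInter hκ (ι := Unit)
    (by simpa using one_lt_aleph0.trans hκ) (fun _ => hC) (cof_pos.1 (aleph0_pos.trans hκ))
  exact ⟨l, ⟨hlκ, hl⟩, mem_iInter.1 hlC ()⟩

theorem exists_forall_isStationaryIn_lt_apply (hκ : ℵ₀ < κ.cof)
    {f : Ordinal.{u} → ℕ → Ordinal.{u}} (hf : ∀ α ∈ cofOmegaBelow κ, α ≤ ⨆ n, f α n) :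
    ∃ n, ∀ β < κ, IsStationaryIn {α ∈ cofOmegaBelow κ | β < f α n} κ := by
  by_contra! h
  have : ∀ n, ∃ β < κ, ∃ C, IsClubIn C κ ∧ Disjoint {α ∈ cofOmegaBelow κ | β < f α n} C := by
    intro n
    obtain ⟨β, hβ, hns⟩ := h n
    exact ⟨β, hβ, (not_isStationaryIn_iff fun α hα => hα.1.1).1 hns⟩
  choose β hβκ C hC hdisj using this
  obtain ⟨l, hlC, hβl, hlκ, hl⟩ := exists_cof_eq_aleph0_mem_iInter hκ (by simpa using hκ) hC
    (lift_iSup_lt_of_lt_cof (by simpa using hκ) hβκ)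
  obtain ⟨n, hn⟩ := Ordinal.lt_iSup_iff.1 (hβl.trans_le (hf l ⟨hlκ, hl⟩))
  exact disjoint_left.1 (hdisj n) ⟨⟨hlκ, hl⟩, (Ordinal.le_iSup β n).trans_lt hn⟩
    (mem_iInter.1 hlC n)

end UncountableCof

section Regular

variable {κ : Cardinal.{u}}

theorem exists_mem_diagInter_ge (hreg : κ.IsRegular) (hunc : ℵ₀ < κ)
    {D : Ordinal.{u} → Set Ordinal.{u}} (hD : ∀ β < κ.ord, IsClubIn (D β) κ.ord)
    {a : Ordinal.{u}} (ha : a < κ.ord) : ∃ b ∈ diagInter κ.ord D, a ≤ b := by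
  have hκ : ℵ₀ < κ.ord.cof := by rwa [hreg.cof_ord]
  have step : ∀ γ < κ.ord, ∃ δ < κ.ord, γ < δ ∧ ∀ β < γ, δ ∈ D β := by
    intro γ hγ
    have hcard : Cardinal.lift.{u} #(Iio γ) < Cardinal.lift.{u + 1} κ.ord.cof := by
      rw [Cardinal.mk_Iio_ordinal, Cardinal.lift_lift, hreg.cof_ord,
        Cardinal.lift_umax.{u, u + 1}, Cardinal.lift_lt]
      exact lt_ord.1 hγ
    obtain ⟨δ, hδD, hγδ, hδκ, -⟩ := exists_cof_eq_aleph0_mem_iInter hκ hcard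
      (fun β => hD β (β.2.trans hγ)) hγ
    exact ⟨δ, hδκ, hγδ, fun β hβ => mem_iInter.1 hδD ⟨β, hβ⟩⟩
  obtain ⟨x, rfl, hx, hxκ, hxD⟩ := exists_strictMono_nat_iSup_lt hκ step ha
  refine ⟨⨆ n, x n, ⟨hxκ, fun β hβ => ?_⟩, Ordinal.le_iSup x 0⟩
  obtain ⟨N, hN⟩ := Ordinal.lt_iSup_iff.1 hβ
  refine (hD β (hβ.trans hxκ)).mem_of_forall_lt_exists hxκ hβ.bot_lt fun δ hδ => ?_
  obtain ⟨n, hn⟩ := Ordinal.lt_iSup_iff.1 hδ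
  exact ⟨x (max n N + 1), hxD _ β (hN.trans_le (hx.monotone (le_max_right _ _))),
    hn.trans_le (hx.monotone (by omega)), Ordinal.le_iSup x _⟩

theorem isClubIn_diagInter (hreg : κ.IsRegular) (hunc : ℵ₀ < κ)
    {D : Ordinal.{u} → Set Ordinal.{u}} (hD : ∀ β < κ.ord, IsClubIn (D β) κ.ord) :
    IsClubIn (diagInter κ.ord D) κ.ord :=
  ⟨fun _ h => h.1, fun _ => exists_mem_diagInter_ge hreg hunc hD,
    fun _ hs hne hlt => sSup_mem_diagInter hD hs hne hlt⟩

theorem exists_isStationaryIn_le_of_regressive (hreg : κ.IsRegular) (hunc : ℵ₀ < κ)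
    {S : Set Ordinal.{u}} (hS : IsStationaryIn S κ.ord) {g : Ordinal.{u} → Ordinal.{u}}
    (hg : ∀ α ∈ S, g α < α) : ∃ β < κ.ord, IsStationaryIn {α ∈ S | g α ≤ β} κ.ord := by
  by_contra! h
  have : ∀ β < κ.ord, ∃ D, IsClubIn D κ.ord ∧ Disjoint {α ∈ S | g α ≤ β} D := fun β hβ =>
    (not_isStationaryIn_iff fun α hα => hS.1 hα.1).1 (h β hβ)
  choose! D hD hdisj using this
  obtain ⟨α, hαS, hακ, hαD⟩ := hS.2 _ (isClubIn_diagInter hreg hunc hD)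
  exact disjoint_left.1 (hdisj _ ((hg α hαS).trans hακ)) ⟨hαS, le_rfl⟩ (hαD _ (hg α hαS))

end Regular

/-- For every regular uncountable cardinal `κ` there is a set of cofinality-`ω` ordinals
below `κ` which is stationary and co-stationary in `κ ∩ Cof(ω)`. -/
theorem exists_stationary_costationary_cof_omega
    (κ : Cardinal) (hreg : κ.IsRegular) (hunc : Cardinal.aleph0 < κ) :
    ∃ S ⊆ {α : Ordinal | α < κ.ord ∧ α.cof = Cardinal.aleph0},
      IsStationaryIn S κ.ord ∧
      IsStationaryIn ({α : Ordinal | α < κ.ord ∧ α.cof = Cardinal.aleph0} \ S) κ.ord := by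
  have hκ : ℵ₀ < κ.ord.cof := by rwa [hreg.cof_ord]
  choose! f hf_lt hf_sup using fun α (hα : α ∈ cofOmegaBelow κ.ord) =>
    exists_nat_seq_iSup_eq_of_cof_eq_aleph0 hα.2
  obtain ⟨n, hn⟩ := exists_forall_isStationaryIn_lt_apply hκ fun α hα => (hf_sup α hα).ge
  obtain ⟨β, hβ, hstat⟩ := exists_isStationaryIn_le_of_regressive hreg hunc
    (isStationaryIn_cofOmegaBelow hκ) (g := fun α => f α n) fun α hα => hf_lt α hα n
  refine ⟨{α ∈ cofOmegaBelow κ.ord | β < f α n}, sep_subset _ _, hn β hβ, ?_⟩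
  convert hstat using 1
  ext α
  simp only [cofOmegaBelow, mem_sdiff, mem_ofPred_eq, not_and, not_lt]
  tauto
end
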